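/- Let Θ : ℝ^n → M_n(ℝ) be smooth with Θ(x) antisymmetric for every x and γ : ℝ^{2n} → M_n(ℝ) smooth. Define the bracket of smooth functions f,g on ℝ^{2n} (coordinates (x,p)) by {f,g} = Σ Θ^{lm}(x) ∂f/∂x^l · ∂g/∂x^m + Σ γ^l_m(x,p)(∂f/∂x^l · ∂g/∂p_m − ∂f/∂p_m · ∂g/∂x^l). Let A : ℝ^n → ℝ^n and Π : ℝ^{2n} → ℝ^n be smooth and assume the kernel condition: for every x and all indices l,k, (∂Π_k/∂x^l)(x,A(x)) + Σ_m (∂Π_k/∂p_m)(x,A(x)) · (∂A_m/∂x^l)(x) = 0. Define F_{lm}(x) = {p_l − A_l, p_m − A_m}(x, A(x)), where p_l − A_l denotes the function (x,p) ↦ p_l − A_l(x). Then for all j,k and all x: {Π_j, Π_k}(x, A(x)) = Σ_{l,m} F_{lm}(x) · (∂Π_j/∂p_l)(x,A(x)) · (∂Π_k/∂p_m)(x,A(x)). -/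

import Mathlib

open scoped BigOperators
open Matrix

/-- partial derivative w.r.t. `x^l` (first factor of `ℝ^n × ℝ^n`). -/
noncomputable def pdx {n : ℕ} (l : Fin n) (f : (Fin n → ℝ) × (Fin n → ℝ) → ℝ)
    (z : (Fin n → ℝ) × (Fin n → ℝ)) : ℝ :=
  fderiv ℝ f z (Pi.single l 1, 0)

/-- partial derivative w.r.t. `p_m` (second factor of `ℝ^n × ℝ^n`). -/
noncomputable def pdp {n : ℕ} (m : Fin n) (f : (Fin n → ℝ) × (Fin n → ℝ) → ℝ)
    (z : (Fin n → ℝ) × (Fin n → ℝ)) : ℝ :=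
  fderiv ℝ f z (0, Pi.single m 1)

/-- partial derivative `∂/∂x^l` of a scalar function on `ℝ^n`. -/
noncomputable def pdb {n : ℕ} (l : Fin n) (h : (Fin n → ℝ) → ℝ) (x : Fin n → ℝ) : ℝ :=
  fderiv ℝ h x (Pi.single l 1)

/-- the bracket
`{f,g} = Σ Θ^{lm}(x) ∂f/∂x^l ∂g/∂x^m + Σ γ^l_m(x,p)(∂f/∂x^l ∂g/∂p_m − ∂f/∂p_m ∂g/∂x^l)`. -/
noncomputable def locBracket {n : ℕ} (Θ : (Fin n → ℝ) → Matrix (Fin n) (Fin n) ℝ)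
    (γ : (Fin n → ℝ) × (Fin n → ℝ) → Matrix (Fin n) (Fin n) ℝ)
    (f g : (Fin n → ℝ) × (Fin n → ℝ) → ℝ) (z : (Fin n → ℝ) × (Fin n → ℝ)) : ℝ :=
  (∑ l, ∑ m, Θ z.1 l m * pdx l f z * pdx m g z) +
    ∑ l, ∑ m, γ z l m * (pdx l f z * pdp m g z - pdp m f z * pdx l g z)

section aux

lemma stmt15_mom_fderiv {n : ℕ} (A : (Fin n → ℝ) → (Fin n → ℝ)) (hA : ContDiff ℝ (⊤ : ℕ∞) A)
    (l : Fin n) (z : (Fin n → ℝ) × (Fin n → ℝ)) :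
    HasFDerivAt (fun w : (Fin n → ℝ) × (Fin n → ℝ) => w.2 l - A w.1 l)
      (((ContinuousLinearMap.proj l).comp (ContinuousLinearMap.snd ℝ (Fin n → ℝ) (Fin n → ℝ))) -
        ((fderiv ℝ (fun x => A x l) z.1).comp (ContinuousLinearMap.fst ℝ (Fin n → ℝ) (Fin n → ℝ)))) z := by
  have hAl : DifferentiableAt ℝ (fun x => A x l) z.1 :=
    ((contDiff_pi.mp hA l).differentiable (by simp)).differentiableAt
  have h2 : HasFDerivAt (fun w : (Fin n → ℝ) × (Fin n → ℝ) => A w.1 l)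
      ((fderiv ℝ (fun x => A x l) z.1).comp (ContinuousLinearMap.fst ℝ (Fin n → ℝ) (Fin n → ℝ))) z :=
    hAl.hasFDerivAt.comp z hasFDerivAt_fst
  have h1 : HasFDerivAt (fun w : (Fin n → ℝ) × (Fin n → ℝ) => w.2 l)
      ((ContinuousLinearMap.proj l).comp (ContinuousLinearMap.snd ℝ (Fin n → ℝ) (Fin n → ℝ))) z :=
    ((ContinuousLinearMap.proj (R := ℝ) (φ := fun _ : Fin n => ℝ) l).comp
      (ContinuousLinearMap.snd ℝ (Fin n → ℝ) (Fin n → ℝ))).hasFDerivAt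
  exact h1.sub h2

lemma stmt15_pdx_mom {n : ℕ} (A : (Fin n → ℝ) → (Fin n → ℝ)) (hA : ContDiff ℝ (⊤ : ℕ∞) A)
    (s l : Fin n) (z : (Fin n → ℝ) × (Fin n → ℝ)) :
    pdx s (fun w => w.2 l - A w.1 l) z = - pdb s (fun x => A x l) z.1 := by
  unfold pdx pdb
  rw [(stmt15_mom_fderiv A hA l z).fderiv]
  simp

lemma stmt15_pdp_mom {n : ℕ} (A : (Fin n → ℝ) → (Fin n → ℝ)) (hA : ContDiff ℝ (⊤ : ℕ∞) A)
    (m l : Fin n) (z : (Fin n → ℝ) × (Fin n → ℝ)) :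
    pdp m (fun w => w.2 l - A w.1 l) z = if l = m then 1 else 0 := by
  unfold pdp
  rw [(stmt15_mom_fderiv A hA l z).fderiv]
  simp [Pi.single_apply]

lemma stmt15_sum_swap3 {n : ℕ} (f : Fin n → Fin n → Fin n → ℝ) :
    ∑ a, ∑ b, ∑ c, f a b c = ∑ b, ∑ c, ∑ a, f a b c := by
  rw [Finset.sum_comm]
  exact Finset.sum_congr rfl fun b _ => Finset.sum_comm

lemma stmt15_sum_rev3 {n : ℕ} (f : Fin n → Fin n → Fin n → ℝ) :
    ∑ a, ∑ b, ∑ c, f a b c = ∑ c, ∑ b, ∑ a, f a b c := by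
  calc ∑ a, ∑ b, ∑ c, f a b c = ∑ b, ∑ a, ∑ c, f a b c := Finset.sum_comm
    _ = ∑ b, ∑ c, ∑ a, f a b c := Finset.sum_congr rfl fun b _ => Finset.sum_comm
    _ = ∑ c, ∑ b, ∑ a, f a b c := Finset.sum_comm

lemma stmt15_sum_swap4 {n : ℕ} (f : Fin n → Fin n → Fin n → Fin n → ℝ) :
    ∑ a, ∑ b, ∑ c, ∑ d, f a b c d = ∑ c, ∑ d, ∑ a, ∑ b, f a b c d := by
  rw [stmt15_sum_swap3 (fun a b c => ∑ d, f a b c d)]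
  rw [stmt15_sum_swap3 (fun b c a => ∑ d, f a b c d)]
  refine Finset.sum_congr rfl fun c _ => ?_
  rw [stmt15_sum_swap3 (fun a b d => f a b c d), stmt15_sum_swap3 (fun b d a => f a b c d)]

lemma stmt15_keyP1 {n : ℕ} (T B : Fin n → Fin n → ℝ) (u v : Fin n → ℝ) :
    ∑ l, ∑ m, T l m * ((∑ s, u s * B l s) * (∑ s, v s * B m s)) =
      ∑ l, ∑ m, (∑ s, ∑ t, T s t * B s l * B t m) * (u l * v m) := by
  simp only [Finset.mul_sum, Finset.sum_mul]
  rw [stmt15_sum_swap4 (fun l m s t => T s t * B s l * B t m * (u l * v m))]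
  refine Finset.sum_congr rfl fun l _ => Finset.sum_congr rfl fun m _ => ?_
  rw [Finset.sum_comm]
  exact Finset.sum_congr rfl fun s _ => Finset.sum_congr rfl fun t _ => by ring

lemma stmt15_keyP2 {n : ℕ} (G B : Fin n → Fin n → ℝ) (u v : Fin n → ℝ) :
    ∑ l, ∑ m, (G l m * v m) * (∑ s, u s * B l s) =
      ∑ l, ∑ m, (∑ s, G s m * B s l) * (u l * v m) := by
  simp only [Finset.mul_sum, Finset.sum_mul]
  rw [stmt15_sum_rev3 (fun l m s => G l m * v m * (u s * B l s))]
  refine Finset.sum_congr rfl fun l _ => Finset.sum_congr rfl fun m _ =>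
    Finset.sum_congr rfl fun s _ => by ring

lemma stmt15_keyP3 {n : ℕ} (G B : Fin n → Fin n → ℝ) (u v : Fin n → ℝ) :
    ∑ l, ∑ m, (G l m * u m) * (∑ s, v s * B l s) =
      ∑ l, ∑ m, (∑ s, G s l * B s m) * (u l * v m) := by
  simp only [Finset.mul_sum, Finset.sum_mul]
  rw [stmt15_sum_swap3 (fun l m s => G l m * u m * (v s * B l s))]
  refine Finset.sum_congr rfl fun l _ => Finset.sum_congr rfl fun m _ =>
    Finset.sum_congr rfl fun s _ => by ring

lemma stmt15_keyAlg {n : ℕ} (T G B : Fin n → Fin n → ℝ) (u v : Fin n → ℝ) :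
    (∑ l, ∑ m, T l m * (-∑ s, u s * B l s) * (-∑ s, v s * B m s)) +
      ∑ l, ∑ m, G l m * ((-∑ s, u s * B l s) * v m - u m * (-∑ s, v s * B l s)) =
    ∑ l, ∑ m, ((∑ s, ∑ t, T s t * B s l * B t m) +
        (∑ s, (G s l * B s m - G s m * B s l))) * u l * v m := by
  have h1 := stmt15_keyP1 T B u v
  have h2 := stmt15_keyP2 G B u v
  have h3 := stmt15_keyP3 G B u v
  calc (∑ l, ∑ m, T l m * (-∑ s, u s * B l s) * (-∑ s, v s * B m s)) +
      ∑ l, ∑ m, G l m * ((-∑ s, u s * B l s) * v m - u m * (-∑ s, v s * B l s))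
      = (∑ l, ∑ m, T l m * ((∑ s, u s * B l s) * (∑ s, v s * B m s))) +
        ((∑ l, ∑ m, (G l m * u m) * (∑ s, v s * B l s)) -
          ∑ l, ∑ m, (G l m * v m) * (∑ s, u s * B l s)) := by
        rw [← Finset.sum_sub_distrib]
        congr 1
        · exact Finset.sum_congr rfl fun l _ => Finset.sum_congr rfl fun m _ => by ring
        · refine Finset.sum_congr rfl fun l _ => ?_
          rw [← Finset.sum_sub_distrib]
          exact Finset.sum_congr rfl fun m _ => by ring
    _ = (∑ l, ∑ m, (∑ s, ∑ t, T s t * B s l * B t m) * (u l * v m)) +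
        ((∑ l, ∑ m, (∑ s, G s l * B s m) * (u l * v m)) -
          ∑ l, ∑ m, (∑ s, G s m * B s l) * (u l * v m)) := by rw [h1, h2, h3]
    _ = ∑ l, ∑ m, ((∑ s, ∑ t, T s t * B s l * B t m) +
        (∑ s, (G s l * B s m - G s m * B s l))) * u l * v m := by
        rw [← Finset.sum_sub_distrib, ← Finset.sum_add_distrib]
        refine Finset.sum_congr rfl fun l _ => ?_
        rw [← Finset.sum_sub_distrib, ← Finset.sum_add_distrib]
        refine Finset.sum_congr rfl fun m _ => ?_
        rw [Finset.sum_sub_distrib]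
        ring

end aux

theorem stmt_15 {n : ℕ} (Θ : (Fin n → ℝ) → Matrix (Fin n) (Fin n) ℝ)
    (hΘanti : ∀ x, (Θ x)ᵀ = -Θ x)
    (hΘ : ∀ l m, ContDiff ℝ (⊤ : ℕ∞) fun x => Θ x l m)
    (γ : (Fin n → ℝ) × (Fin n → ℝ) → Matrix (Fin n) (Fin n) ℝ)
    (hγ : ∀ l m, ContDiff ℝ (⊤ : ℕ∞) fun z => γ z l m)
    (A : (Fin n → ℝ) → (Fin n → ℝ)) (hA : ContDiff ℝ (⊤ : ℕ∞) A)
    (Pi_ : (Fin n → ℝ) × (Fin n → ℝ) → (Fin n → ℝ)) (hPi_ : ContDiff ℝ (⊤ : ℕ∞) Pi_)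
    (hker : ∀ (x : Fin n → ℝ) (l k : Fin n),
      pdx l (fun z => Pi_ z k) (x, A x) +
        ∑ m, pdp m (fun z => Pi_ z k) (x, A x) * pdb l (fun x => A x m) x = 0)
    (F : Fin n → Fin n → (Fin n → ℝ) → ℝ)
    (hF : ∀ l m x, F l m x =
      locBracket Θ γ (fun z => z.2 l - A z.1 l) (fun z => z.2 m - A z.1 m) (x, A x)) :
    ∀ (j k : Fin n) (x : Fin n → ℝ),
      locBracket Θ γ (fun z => Pi_ z j) (fun z => Pi_ z k) (x, A x) =
        ∑ l, ∑ m, F l m x * pdp l (fun z => Pi_ z j) (x, A x) *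
          pdp m (fun z => Pi_ z k) (x, A x) := by
  intro j k x
  have hX : ∀ (i l : Fin n), pdx l (fun z => Pi_ z i) (x, A x) =
      -∑ s, pdp s (fun z => Pi_ z i) (x, A x) * pdb l (fun x' => A x' s) x := by
    intro i l
    have h := hker x l i
    linarith
  have hFval : ∀ l m, F l m x =
      (∑ s, ∑ t, Θ x s t * pdb s (fun x' => A x' l) x * pdb t (fun x' => A x' m) x) +
        ∑ s, (γ (x, A x) s l * pdb s (fun x' => A x' m) x -
          γ (x, A x) s m * pdb s (fun x' => A x' l) x) := by
    intro l m
    rw [hF l m x]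
    unfold locBracket
    simp only [stmt15_pdx_mom A hA, stmt15_pdp_mom A hA]
    congr 1
    · exact Finset.sum_congr rfl fun s _ => Finset.sum_congr rfl fun t _ => by ring
    · refine Finset.sum_congr rfl fun s _ => ?_
      have key : ∀ t, γ (x, A x) s t *
          (-pdb s (fun x' => A x' l) x * (if m = t then (1:ℝ) else 0) -
            (if l = t then (1:ℝ) else 0) * -pdb s (fun x' => A x' m) x) =
          (if m = t then -(γ (x, A x) s m * pdb s (fun x' => A x' l) x) else 0) +
            (if l = t then γ (x, A x) s l * pdb s (fun x' => A x' m) x else 0) := by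
        intro t
        by_cases h1 : m = t <;> by_cases h2 : l = t <;> simp [h1, h2] <;> ring
      rw [Finset.sum_congr rfl fun t _ => key t, Finset.sum_add_distrib,
        Finset.sum_ite_eq, Finset.sum_ite_eq]
      simp
      ring
  unfold locBracket
  simp only [hX, hFval]
  exact stmt15_keyAlg (Θ x) (fun s t => γ (x, A x) s t)
    (fun s l => pdb s (fun x' => A x' l) x)
    (fun l => pdp l (fun z => Pi_ z j) (x, A x))
    (fun m => pdp m (fun z => Pi_ z k) (x, A x))
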